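/- arXiv:1809.03533 — 2 statements merged into one kernel-verified Lean document; each statement's English description precedes it below -/
import Mathlib

section
/- Let n = 2m, and let μ₁ ≥ μ₂ ≥ ⋯ ≥ μ_m ≥ 0 be integers. Set λ = (μ₁,…,μ_m,-μ_m,…,-μ₁). Then the Weyl dimension formula for GL(2m) evaluated at λ equals the square of the D_m Weyl dimension formula evaluated at (μ₁+1/2,…,μ_m+1/2) divided by 2^{2(m-1)}, times the product ∏_{i=1}^m (2λᵢ + 2m - 2i + 1)/(2m - 2i + 1). Equivalently: dim π(λ) = Sig² · ∏_{i=1}^m (2μᵢ + n - 2i + 1)/(n - 2i + 1), where Sig = dim σ(μ)/2^{m-1} and σ(μ) is the Spin(2m)-irreducible of highest weight μ + (1/2,…,1/2). -/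
/-!
Put `ℓᵢ = νᵢ + m - 1 - i = μᵢ + m - i - ½`. Up to a common translate, `λ + ρ` for `GL(2m)` is
`(ℓ₀, …, ℓ_{m-1}, -ℓ_{m-1}, …, -ℓ₀)`, whose Vandermonde product splits into two diagonal blocks and
a square cross block, giving `(∏_{i<j} (ℓᵢ - ℓⱼ)(ℓᵢ + ℓⱼ))² · ∏ 2ℓᵢ`; the first factor is the
`D_m` numerator. The same factorisation at `μ = 0` computes the `GL(2m)` denominator, which then
differs from the square of the `D_m` denominator by `∏ (2m - 2i - 1)` and by
`∏_{i<j<m} (i + j + 1)/(i + j) = 2^{m-1}`, a product telescoping to `2` in each column `j ≥ 1`.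
-/

open Finset

namespace WeylDimension

section PairProd

variable {M : Type*} [CommMonoid M]

def pairProd (n : ℕ) (f : ℕ → ℕ → M) : M := ∏ j ∈ range n, ∏ i ∈ range j, f i j

theorem map_pairProd {N G : Type*} [CommMonoid N] [FunLike G M N] [MonoidHomClass G M N]
    (g : G) (n : ℕ) (f : ℕ → ℕ → M) : g (pairProd n f) = pairProd n (fun i j => g (f i j)) := by
  simp only [pairProd, map_prod]

theorem pairProd_eq_prod_Ioo (n : ℕ) (f : ℕ → ℕ → M) :
    pairProd n f = ∏ i ∈ range n, ∏ j ∈ Ioo i n, f i j :=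
  prod_comm' fun j i => by simp only [mem_range, mem_Ioo]; omega

theorem prod_univ_prod_Ioi_eq_pairProd (n : ℕ) (f : ℕ → ℕ → M) :
    ∏ i : Fin n, ∏ j ∈ Ioi i, f i j = pairProd n f := by
  rw [pairProd_eq_prod_Ioo, ← Fin.prod_univ_eq_prod_range (fun i => ∏ j ∈ Ioo i n, f i j)]
  refine prod_congr rfl fun i _ => ?_
  rw [← Fin.map_valEmbedding_Ioi, prod_map]
  rfl

theorem pairProd_congr {n : ℕ} {f g : ℕ → ℕ → M}
    (h : ∀ i j, i < j → j < n → f i j = g i j) : pairProd n f = pairProd n g :=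
  prod_congr rfl fun j hj => prod_congr rfl fun i hi =>
    h i j (mem_range.1 hi) (mem_range.1 hj)

theorem pairProd_succ (n : ℕ) (f : ℕ → ℕ → M) :
    pairProd (n + 1) f = pairProd n f * ∏ i ∈ range n, f i n :=
  prod_range_succ _ n

theorem pairProd_mul (n : ℕ) (f g : ℕ → ℕ → M) :
    pairProd n (fun i j => f i j * g i j) = pairProd n f * pairProd n g := by
  simp only [pairProd, prod_mul_distrib]

theorem pairProd_div {G : Type*} [DivisionCommMonoid G] (n : ℕ) (f g : ℕ → ℕ → G) :
    pairProd n (fun i j => f i j / g i j) = pairProd n f / pairProd n g := by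
  simp only [pairProd, prod_div_distrib]

theorem pairProd_add (m k : ℕ) (f : ℕ → ℕ → M) :
    pairProd (m + k) f = pairProd m f * (∏ j ∈ range k, ∏ i ∈ range m, f i (m + j)) *
      pairProd k (fun i j => f (m + i) (m + j)) := by
  simp only [pairProd, prod_range_add, prod_mul_distrib, mul_assoc]

theorem pairProd_reflect (n : ℕ) (f : ℕ → ℕ → M) :
    pairProd n f = pairProd n (fun i j => f (n - 1 - j) (n - 1 - i)) := by
  rw [pairProd, pairProd_eq_prod_Ioo, ← prod_range_reflect]
  refine prod_congr rfl fun j hj => ?_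
  rw [mem_range] at hj
  refine prod_nbij' (fun i => n - 1 - i) (fun i => n - 1 - i) ?_ ?_ ?_ ?_ ?_
  all_goals intro i hi; simp only [mem_range, mem_Ioo] at hi ⊢
  all_goals first | omega | (congr 1; omega)

theorem prod_range_prod_range_eq_pairProd (n : ℕ) (g : ℕ → ℕ → M) :
    ∏ i ∈ range n, ∏ j ∈ range n, g i j =
      pairProd n g * pairProd n (fun i j => g j i) * ∏ i ∈ range n, g i i := by
  induction n with
  | zero => simp [pairProd]
  | succ n ih =>
    simp only [prod_range_succ, prod_mul_distrib, ih, pairProd_succ]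
    ac_rfl

end PairProd

theorem pairProd_sub_append_neg_reverse {R : Type*} [CommRing R] (m : ℕ) (ℓ x : ℕ → R)
    (hx₁ : ∀ i < m, x i = ℓ i) (hx₂ : ∀ k < m, x (m + k) = -ℓ (m - 1 - k)) :
    pairProd (m + m) (fun a b => x a - x b) =
      pairProd m (fun i j => (ℓ i - ℓ j) * (ℓ i + ℓ j)) ^ 2 * ∏ i ∈ range m, 2 * ℓ i := by
  have upper : pairProd m (fun a b => x a - x b) = pairProd m (fun i j => ℓ i - ℓ j) :=
    pairProd_congr fun i j hij hj => by rw [hx₁ i (hij.trans hj), hx₁ j hj]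
  have lower : pairProd m (fun a b => x (m + a) - x (m + b)) =
      pairProd m (fun i j => ℓ i - ℓ j) := by
    rw [pairProd_reflect]
    refine pairProd_congr fun i j hij hj => ?_
    rw [hx₂ _ (by omega), hx₂ _ (by omega), Nat.sub_sub_self (by omega),
      Nat.sub_sub_self (by omega)]
    ring
  have cross : ∏ j ∈ range m, ∏ i ∈ range m, (x i - x (m + j)) =
      pairProd m (fun i j => ℓ i + ℓ j) ^ 2 * ∏ i ∈ range m, 2 * ℓ i := by
    calc ∏ j ∈ range m, ∏ i ∈ range m, (x i - x (m + j))
        = ∏ j ∈ range m, ∏ i ∈ range m, (ℓ j + ℓ i) := by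
          rw [← prod_range_reflect]
          refine prod_congr rfl fun j hj => prod_congr rfl fun i hi => ?_
          rw [mem_range] at hi hj
          rw [hx₁ i hi, hx₂ _ (by omega), Nat.sub_sub_self (by omega)]
          ring
      _ = _ := by
          rw [prod_range_prod_range_eq_pairProd, sq]
          congr 2
          · exact pairProd_congr fun i j _ _ => add_comm _ _
          · exact funext fun i => (two_mul (ℓ i)).symm
  rw [pairProd_add, upper, lower, cross, pairProd_mul]
  ring

theorem prod_range_add_add_one (j : ℕ) (hj : 0 < j) :
    ∏ i ∈ range j, (i + j + 1) = 2 * ∏ i ∈ range j, (i + j) := by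
  refine Nat.eq_of_mul_eq_mul_right hj ?_
  calc (∏ i ∈ range j, (i + j + 1)) * j = ∏ i ∈ range (j + 1), (i + j) := by
        rw [prod_range_succ']
        simp only [add_right_comm _ 1 j, zero_add]
    _ = (2 * ∏ i ∈ range j, (i + j)) * j := by
        rw [prod_range_succ]
        ring

theorem pairProd_add_add_one (m : ℕ) :
    pairProd m (fun i j => i + j + 1) = 2 ^ (m - 1) * pairProd m (fun i j => i + j) := by
  induction m with
  | zero => simp [pairProd]
  | succ m ih =>
    rcases Nat.eq_zero_or_pos m with rfl | hm
    · simp [pairProd]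
    rw [pairProd_succ, pairProd_succ, ih, prod_range_add_add_one m hm,
      show m + 1 - 1 = m - 1 + 1 by omega, pow_succ]
    ring

theorem cast_sub_one_sub {R : Type*} [AddGroupWithOne R] {i m : ℕ} (h : i < m) :
    ((m - 1 - i : ℕ) : R) = m - 1 - i := by
  rw [Nat.cast_sub (by omega), Nat.cast_pred (by omega)]

theorem pairProd_two_mul_sub_sub_one {R : Type*} [CommRing R] (m : ℕ) :
    pairProd m (fun i j => (2 * m - i - j - 1 : R)) =
      2 ^ (m - 1) * pairProd m (fun i j => (2 * m - i - j - 2 : R)) := by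
  rw [pairProd_reflect, pairProd_reflect m (fun i j => (2 * m - i - j - 2 : R))]
  have h := congrArg (Nat.castRingHom R) (pairProd_add_add_one m)
  rw [map_mul, map_pow, map_ofNat, map_pairProd, map_pairProd, Nat.coe_castRingHom] at h
  refine ((pairProd_congr ?_).trans h).trans (congrArg _ (pairProd_congr ?_)) <;>
    intro i j hij hj <;>
    simp only [cast_sub_one_sub hj, cast_sub_one_sub (hij.trans hj), Nat.cast_add,
      Nat.cast_one] <;>
    ring

theorem pairProd_natCast_sub {K : Type*} [Field K] [NeZero (2 : K)] (m : ℕ) :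
    pairProd (m + m) (fun a b => ((b : K) - a)) =
      (2 ^ (m - 1) * pairProd m (fun i j => ((j : K) - i) * (2 * m - i - j - 2))) ^ 2 *
        ∏ i ∈ range m, (2 * m - 2 * i - 1 : K) := by
  set ℓ : ℕ → K := fun a => m - a - 2⁻¹
  have h2 : (2 : K) * 2⁻¹ = 1 := mul_inv_cancel₀ two_ne_zero
  have hℓ : ∀ k < m, ℓ (m + k) = -ℓ (m - 1 - k) := fun k hk => by
    simp only [ℓ, cast_sub_one_sub hk, Nat.cast_add]
    linear_combination -h2
  calc pairProd (m + m) (fun a b => ((b : K) - a))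
      = pairProd (m + m) (fun a b => ℓ a - ℓ b) := pairProd_congr fun _ _ _ _ => by ring
    _ = pairProd m (fun i j => ((j : K) - i) * (2 * m - i - j - 1)) ^ 2 *
          ∏ i ∈ range m, (2 * m - 2 * i - 1 : K) := by
        rw [pairProd_sub_append_neg_reverse m ℓ ℓ (fun _ _ => rfl) hℓ]
        congr 2
        · exact pairProd_congr fun i j _ _ => by linear_combination (↑i - ↑j) * h2
        · exact funext fun i => by linear_combination -h2
    _ = _ := by
        rw [pairProd_mul, pairProd_mul, pairProd_two_mul_sub_sub_one]
        ring

theorem pairProd_div_mul_prod_eq {K : Type*} [Field K] [CharZero K] (m : ℕ) (ℓ x : ℕ → K)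
    (hx₁ : ∀ i < m, x i = ℓ i) (hx₂ : ∀ k < m, x (m + k) = -ℓ (m - 1 - k)) :
    pairProd (m + m) (fun a b => (x a - x b) / (b - a)) * ∏ i ∈ range m, (2 * m - 2 * i - 1 : K) =
      (pairProd m (fun i j => (ℓ i - ℓ j) * (ℓ i + ℓ j) / ((j - i) * (2 * m - i - j - 2))) /
        2 ^ (m - 1)) ^ 2 * ∏ i ∈ range m, 2 * ℓ i := by
  have hc : ∏ i ∈ range m, (2 * m - 2 * i - 1 : K) ≠ 0 := by
    refine prod_ne_zero_iff.2 fun i hi => ?_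
    have hi : i < m := mem_range.1 hi
    rw [show (2 * m - 2 * i - 1 : K) = ((2 * (m - 1 - i) + 1 : ℕ) : K) by
      push_cast [cast_sub_one_sub hi]; ring]
    exact Nat.cast_ne_zero.2 (by omega)
  rw [pairProd_div, pairProd_div, pairProd_sub_append_neg_reverse m ℓ x hx₁ hx₂,
    pairProd_natCast_sub, div_mul_eq_mul_div, mul_div_mul_right _ _ hc]
  ring

end WeylDimension

open WeylDimension

theorem stmt9_general (m : ℕ) (μ : Fin m → ℕ)
    (lam : Fin (2 * m) → ℤ)
    (hlam₁ : ∀ (i : Fin (2 * m)) (h : (i : ℕ) < m), lam i = μ ⟨i, h⟩)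
    (hlam₂ : ∀ (i : Fin (2 * m)) (h : 2 * m - 1 - (i : ℕ) < m),
      m ≤ (i : ℕ) → lam i = -(μ ⟨2 * m - 1 - (i : ℕ), h⟩ : ℤ))
    (ν : Fin m → ℚ) (hν : ∀ i, ν i = (μ i : ℚ) + 1 / 2) :
    (∏ i : Fin (2 * m), ∏ j ∈ Finset.Ioi i,
        ((lam i : ℚ) - (lam j : ℚ) + (j : ℚ) - (i : ℚ)) / ((j : ℚ) - (i : ℚ))) *
      (∏ i : Fin m, (2 * m - 2 * (i : ℚ) - 1)) =
    ((∏ i : Fin m, ∏ j ∈ Finset.Ioi i,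
        ((ν i - ν j + (j : ℚ) - (i : ℚ)) * (ν i + ν j + 2 * m - (i : ℚ) - (j : ℚ) - 2)) /
          (((j : ℚ) - (i : ℚ)) * (2 * m - (i : ℚ) - (j : ℚ) - 2))) / 2 ^ (m - 1)) ^ 2 *
      (∏ i : Fin m, (2 * (μ i : ℚ) + 2 * m - 2 * (i : ℚ) - 1)) := by
  set ℓ : ℕ → ℚ := fun i => if h : i < m then ν ⟨i, h⟩ + m - i - 1 else 0
  set x : ℕ → ℚ := fun a => if h : a < 2 * m then lam ⟨a, h⟩ - a + m - 1 / 2 else 0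
  have hx₁ : ∀ i < m, x i = ℓ i := fun i hi => by
    simp only [x, ℓ, dif_pos hi, dif_pos (show i < 2 * m by omega), hlam₁ ⟨i, _⟩ hi, hν]
    push_cast
    ring
  have hx₂ : ∀ k < m, x (m + k) = -ℓ (m - 1 - k) := fun k hk => by
    have hk' : m - 1 - k < m := by omega
    simp only [x, ℓ, dif_pos hk', dif_pos (show m + k < 2 * m by omega),
      hlam₂ ⟨m + k, by omega⟩ (by simp only; omega) (by simp only; omega), hν,
      show 2 * m - 1 - (m + k) = m - 1 - k by omega, cast_sub_one_sub hk]
    push_cast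
    ring
  convert pairProd_div_mul_prod_eq m ℓ x hx₁ hx₂ using 4
  · rw [← two_mul, ← prod_univ_prod_Ioi_eq_pairProd]
    refine prod_congr rfl fun i _ => prod_congr rfl fun j _ => ?_
    simp only [x, dif_pos i.isLt, dif_pos j.isLt]
    ring
  · exact Fin.prod_univ_eq_prod_range (fun i => (2 * m - 2 * i - 1 : ℚ)) m
  · rw [← prod_univ_prod_Ioi_eq_pairProd]
    refine prod_congr rfl fun i _ => prod_congr rfl fun j _ => ?_
    simp only [ℓ, dif_pos i.isLt, dif_pos j.isLt]
    ring
  · rw [← Fin.prod_univ_eq_prod_range]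
    refine prod_congr rfl fun i _ => ?_
    simp only [ℓ, dif_pos i.isLt, hν]
    ring

/-- For `n = 2m` and `μ₁ ≥ ⋯ ≥ μ_m ≥ 0`, with `λ = (μ₁,…,μ_m,-μ_m,…,-μ₁)`, the
Weyl dimension formula for `GL(2m)` at `λ` satisfies
`dim π(λ) · ∏_{i=1}^m (2m-2i+1) = (dim σ(μ+½)/2^{m-1})² · ∏_{i=1}^m (2μᵢ+2m-2i+1)`,
where `dim σ(ν)` is the `D_m` Weyl dimension formula (all products written 0-based). -/
theorem stmt9 (m : ℕ) (hm : 0 < m) (μ : Fin m → ℕ)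
    (hdec : ∀ i j : Fin m, i ≤ j → μ j ≤ μ i)
    (lam : Fin (2 * m) → ℤ)
    (hlam₁ : ∀ (i : Fin (2 * m)) (h : (i : ℕ) < m), lam i = μ ⟨i, h⟩)
    (hlam₂ : ∀ (i : Fin (2 * m)) (h : 2 * m - 1 - (i : ℕ) < m),
      m ≤ (i : ℕ) → lam i = -(μ ⟨2 * m - 1 - (i : ℕ), h⟩ : ℤ))
    (ν : Fin m → ℚ) (hν : ∀ i, ν i = (μ i : ℚ) + 1 / 2) :
    (∏ i : Fin (2 * m), ∏ j ∈ Finset.Ioi i,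
        ((lam i : ℚ) - (lam j : ℚ) + (j : ℚ) - (i : ℚ)) / ((j : ℚ) - (i : ℚ))) *
      (∏ i : Fin m, (2 * m - 2 * (i : ℚ) - 1)) =
    ((∏ i : Fin m, ∏ j ∈ Finset.Ioi i,
        ((ν i - ν j + (j : ℚ) - (i : ℚ)) * (ν i + ν j + 2 * m - (i : ℚ) - (j : ℚ) - 2)) /
          (((j : ℚ) - (i : ℚ)) * (2 * m - (i : ℚ) - (j : ℚ) - 2))) / 2 ^ (m - 1)) ^ 2 *
      (∏ i : Fin m, (2 * (μ i : ℚ) + 2 * m - 2 * (i : ℚ) - 1)) :=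
  stmt9_general m μ lam hlam₁ hlam₂ ν hν
end

section
/- Let R be a root system with positive system R⁺ and let θ be an automorphism of the root datum of order 2 preserving R⁺. Then the restrictions of roots to the +1 eigenspace of θ (the 'restricted roots', excluding zero restrictions) form a (possibly non-reduced) root system, and restriction gives an injective homomorphism from the θ-fixed subgroup W^θ of the Weyl group into the Weyl group of the restricted root system. -/
/-!
Write `ᾱ = (α + θ α) / 2` for the restricted root. The Cartan integer of the pair `(α, θ α)`
lies in `{-1, 0, 2}` (the value `-2` would make `α` real, and `1` would make `α - θ α` real), so
either `θ α = α`, or `α ⊥ θ α`, or `α + θ α` is a root; accordingly `s α`, `s α * s (θ α)` or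
`s (α + θ α)` is an element of `W^θ` acting on the fixed space as the reflection in `ᾱ`. This
gives stability of the restricted roots, and integrality is checked in each of the three cases.

For the Weyl groups, fix a `θ`-fixed `v` that is regular for the restricted roots, hence for the
roots, since `⟪v, α⟫ = ⟪v, ᾱ⟫`. An element of `W^θ` keeping the positive restricted roots
positive keeps all positive roots positive, so it is trivial, by the usual deletion argument for
words in simple reflections. Otherwise it makes some simple restricted root `δ` negative, and
composing it with a lift of `s δ` to `W^θ` decreases the number of positive restricted roots it
makes negative; induction on that number expresses its restriction through restricted
reflections.
-/

open scoped RealInnerProductSpace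
open Finset

section

variable {E : Type*} [NormedAddCommGroup E] [InnerProductSpace ℝ E]

def IsReflectionFamily (s : E → E ≃ₗ[ℝ] E) : Prop :=
  ∀ α : E, α ≠ 0 → ∀ x : E, s α x = x - (2 * ⟪x, α⟫ / ⟪α, α⟫) • α

namespace IsReflectionFamily

variable {s : E → E ≃ₗ[ℝ] E} (hs : IsReflectionFamily s) {α : E} (hα : α ≠ 0)
include hs hα

lemma apply_self : s α α = -α := by
  rw [hs α hα, mul_div_cancel_right₀ 2 (real_inner_self_pos.mpr hα).ne']
  module

lemma apply_of_two_inner_eq {x : E} {k : ℝ} (hk : 2 * ⟪x, α⟫ = k * ⟪α, α⟫) :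
    s α x = x - k • α := by
  rw [hs α hα, hk, mul_div_cancel_right₀ k (real_inner_self_pos.mpr hα).ne']

lemma apply_apply (x : E) : s α (s α x) = x := by
  have hA := (real_inner_self_pos.mpr hα).ne'
  rw [hs α hα (s α x), hs α hα x, inner_sub_left, real_inner_smul_left]
  match_scalars
  · ring
  · field_simp
    ring

lemma mul_self : s α * s α = 1 :=
  LinearEquiv.ext (hs.apply_apply hα)

lemma inv_eq : (s α)⁻¹ = s α :=
  inv_eq_of_mul_eq_one_right (hs.mul_self hα)

lemma inner_map_map (x y : E) : ⟪s α x, s α y⟫ = ⟪x, y⟫ := by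
  have hA := (real_inner_self_pos.mpr hα).ne'
  rw [hs α hα x, hs α hα y]
  simp only [inner_sub_left, inner_sub_right, real_inner_smul_left, real_inner_smul_right,
    real_inner_comm α]
  field_simp
  ring

lemma smul_eq {c : ℝ} (hc : c ≠ 0) : s (c • α) = s α := by
  have hA := (real_inner_self_pos.mpr hα).ne'
  ext x
  rw [hs _ (smul_ne_zero hc hα), hs α hα]
  simp only [real_inner_smul_left, real_inner_smul_right, smul_smul]
  match_scalars
  · rfl
  · field_simp

lemma map_eq_conj (w : E ≃ₗ[ℝ] E) (hw : ∀ x y, ⟪w x, w y⟫ = ⟪x, y⟫) :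
    s (w α) = w * s α * w⁻¹ := by
  ext x
  have hx : x = w (w⁻¹ x) := (w.apply_symm_apply x).symm
  rw [LinearEquiv.mul_apply, LinearEquiv.mul_apply, hs _ (by simpa using hα), hs α hα,
    map_sub, map_smul, ← hx, hw, hx, hw, ← hx]

lemma apply_map_of_map_eq {θ : E ≃ₗ[ℝ] E} (hθ : ∀ x y, ⟪θ x, θ y⟫ = ⟪x, y⟫) (hθα : θ α = α)
    (z : E) : s α (θ z) = θ (s α z) := by
  have h := hs.map_eq_conj hα θ hθ
  rw [hθα] at h
  simpa using DFunLike.congr_fun h (θ z)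

end IsReflectionFamily

@[elab_as_elim]
lemma Finset.induction_on_value_lt {ι : Type*} {S : Finset ι} (f : ι → ℝ) {p : ι → Prop}
    {x : ι} (hx : x ∈ S) (h : ∀ x ∈ S, (∀ y ∈ S, f y < f x → p y) → p x) : p x := by
  classical
  revert x hx
  by_contra! hS
  obtain ⟨x, hx, hmin⟩ := (S.filter (¬ p ·)).exists_min_image f
    (by simpa [Finset.Nonempty] using hS)
  rw [mem_filter] at hx
  refine hx.2 (h x hx.1 fun y hy hlt => ?_)
  by_contra hpy
  exact (hmin y (mem_filter.mpr ⟨hy, hpy⟩)).not_gt hlt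

structure IsRootSet (s : E → E ≃ₗ[ℝ] E) (P : Finset E) : Prop where
  reflections : IsReflectionFamily s
  zero_notMem : (0 : E) ∉ P
  reflection_mem : ∀ α ∈ P, ∀ β ∈ P, s α β ∈ P
  exists_int : ∀ α ∈ P, ∀ β ∈ P, ∃ k : ℤ, 2 * ⟪α, β⟫ = k * ⟪β, β⟫

def weylGroup (s : E → E ≃ₗ[ℝ] E) (P : Finset E) : Subgroup (E ≃ₗ[ℝ] E) :=
  Subgroup.closure {g | ∃ α ∈ P, g = s α}

noncomputable def posRoots (P : Finset E) (v : E) : Finset E :=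
  P.filter (0 < ⟪v, ·⟫)

open Classical in
noncomputable def simpleRoots (P : Finset E) (v : E) : Finset E :=
  (posRoots P v).filter fun x => ∀ y ∈ posRoots P v, ∀ z ∈ posRoots P v, y + z ≠ x

@[simp]
lemma mem_posRoots {P : Finset E} {v x : E} : x ∈ posRoots P v ↔ x ∈ P ∧ 0 < ⟪v, x⟫ :=
  mem_filter

open Classical in
lemma mem_simpleRoots {P : Finset E} {v x : E} : x ∈ simpleRoots P v ↔
    x ∈ posRoots P v ∧ ∀ y ∈ posRoots P v, ∀ z ∈ posRoots P v, y + z ≠ x :=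
  mem_filter

lemma posRoots_subset {P : Finset E} {v : E} : posRoots P v ⊆ P :=
  filter_subset _ _

lemma simpleRoots_subset_posRoots {P : Finset E} {v : E} : simpleRoots P v ⊆ posRoots P v :=
  fun _ h => (mem_simpleRoots.mp h).1

section weylGroup

variable {s : E → E ≃ₗ[ℝ] E} {P Q : Finset E}

lemma reflection_mem_weylGroup {α : E} (hα : α ∈ P) : s α ∈ weylGroup s P :=
  Subgroup.subset_closure ⟨α, hα, rfl⟩

lemma weylGroup_mono (h : Q ⊆ P) : weylGroup s Q ≤ weylGroup s P :=
  Subgroup.closure_mono fun _ ⟨α, hα, hg⟩ => ⟨α, h hα, hg⟩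

lemma list_prod_mem_weylGroup {l : List E} (hl : ∀ δ ∈ l, δ ∈ P) :
    (l.map s).prod ∈ weylGroup s P :=
  Subgroup.list_prod_mem _ <| by simpa using fun δ hδ => reflection_mem_weylGroup (hl δ hδ)

lemma IsReflectionFamily.exists_list_of_mem_weylGroup (hs : IsReflectionFamily s)
    (hP : (0 : E) ∉ P) {w : E ≃ₗ[ℝ] E} (hw : w ∈ weylGroup s P) :
    ∃ l : List E, (∀ δ ∈ l, δ ∈ P) ∧ w = (l.map s).prod := by
  induction hw using Subgroup.closure_induction_left with
  | one => exact ⟨[], by simp, rfl⟩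
  | mul_left _ hg _ _ ih | inv_mul_cancel _ hg _ _ ih =>
    obtain ⟨α, hα, rfl⟩ := hg
    obtain ⟨l, hl, rfl⟩ := ih
    refine ⟨α :: l, by simpa [hα] using hl, ?_⟩
    simp [hs.inv_eq (ne_of_mem_of_not_mem hα hP)]

end weylGroup

lemma exists_nonneg_sum_simpleRoots {P : Finset E} {v x : E} (hx : x ∈ posRoots P v) :
    ∃ c : E → ℝ, (∀ γ, 0 ≤ c γ) ∧ x = ∑ γ ∈ simpleRoots P v, c γ • γ := by
  classical
  refine induction_on_value_lt (⟪v, ·⟫) hx fun x hx ih => ?_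
  by_cases hxs : x ∈ simpleRoots P v
  · exact ⟨Pi.single x 1, fun γ => by simp [Pi.single_apply, apply_ite],
      by simp [Pi.single_apply, hxs]⟩
  obtain ⟨y, hy, z, hz, rfl⟩ : ∃ y ∈ posRoots P v, ∃ z ∈ posRoots P v, y + z = x := by
    simpa only [mem_simpleRoots, hx, true_and, not_forall, not_not, exists_prop] using hxs
  have hvy : 0 < ⟪v, y⟫ := (mem_filter.mp hy).2
  have hvz : 0 < ⟪v, z⟫ := (mem_filter.mp hz).2
  obtain ⟨a, ha, rfl⟩ := ih y hy (by rw [inner_add_right]; linarith)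
  obtain ⟨b, hb, rfl⟩ := ih z hz (by rw [inner_add_right]; linarith)
  exact ⟨a + b, fun γ => add_nonneg (ha γ) (hb γ), by simp [add_smul, sum_add_distrib]⟩

lemma nonneg_of_forall_simpleRoots {P : Finset E} {v x : E} (hx : x ∈ posRoots P v)
    (f : E →ₗ[ℝ] ℝ) (hf : ∀ δ ∈ simpleRoots P v, 0 ≤ f δ) : 0 ≤ f x := by
  obtain ⟨c, hc, rfl⟩ := exists_nonneg_sum_simpleRoots hx
  simpa using sum_nonneg fun δ hδ => mul_nonneg (hc δ) (hf δ hδ)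

namespace IsRootSet

variable {s : E → E ≃ₗ[ℝ] E} {P : Finset E} (hP : IsRootSet s P)
include hP

lemma ne_zero {α : E} (hα : α ∈ P) : α ≠ 0 :=
  ne_of_mem_of_not_mem hα hP.zero_notMem

lemma neg_mem {α : E} (hα : α ∈ P) : -α ∈ P := by
  simpa [hP.reflections.apply_self (hP.ne_zero hα)] using hP.reflection_mem α hα α hα

lemma inner_map_map_of_mem_weylGroup {w : E ≃ₗ[ℝ] E} (hw : w ∈ weylGroup s P) (x y : E) :
    ⟪w x, w y⟫ = ⟪x, y⟫ := by
  obtain ⟨l, hl, rfl⟩ := hP.reflections.exists_list_of_mem_weylGroup hP.zero_notMem hw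
  clear hw
  induction l generalizing x y with
  | nil => rfl
  | cons α l ih =>
    simp only [List.map_cons, List.prod_cons, LinearEquiv.mul_apply]
    rw [hP.reflections.inner_map_map (hP.ne_zero (hl α (by simp))),
      ih _ _ fun δ hδ => hl δ (by simp [hδ])]

lemma map_mem_of_mem_weylGroup {w : E ≃ₗ[ℝ] E} (hw : w ∈ weylGroup s P) {β : E} (hβ : β ∈ P) :
    w β ∈ P := by
  obtain ⟨l, hl, rfl⟩ := hP.reflections.exists_list_of_mem_weylGroup hP.zero_notMem hw
  clear hw
  induction l with
  | nil => exact hβ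
  | cons α l ih =>
    simp only [List.map_cons, List.prod_cons, LinearEquiv.mul_apply]
    exact hP.reflection_mem α (hl α (by simp)) _ (ih fun δ hδ => hl δ (by simp [hδ]))

lemma sub_mem_or_sub_mem {α β : E} (hα : α ∈ P) (hβ : β ∈ P) (hpos : 0 < ⟪α, β⟫)
    (hne : α ≠ β) : α - β ∈ P ∨ β - α ∈ P := by
  obtain ⟨k, hk⟩ := hP.exists_int α hα β hβ
  obtain ⟨m, hm⟩ := hP.exists_int β hβ α hα
  rw [real_inner_comm] at hm
  have hA := real_inner_self_pos.mpr (hP.ne_zero hα)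
  have hB := real_inner_self_pos.mpr (hP.ne_zero hβ)
  have hk1 : (1 : ℝ) ≤ k := by exact_mod_cast (show (0 : ℝ) < k by nlinarith)
  have hm1 : (1 : ℝ) ≤ m := by exact_mod_cast (show (0 : ℝ) < m by nlinarith)
  rcases eq_or_lt_of_le hk1 with hk1 | hk2
  · left
    have h := hP.reflection_mem β hβ α hα
    rwa [hP.reflections.apply_of_two_inner_eq (hP.ne_zero hβ) hk, ← hk1, one_smul] at h
  rcases eq_or_lt_of_le hm1 with hm1 | hm2
  · right
    rw [real_inner_comm] at hm
    have h := hP.reflection_mem α hα β hβ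
    rwa [hP.reflections.apply_of_two_inner_eq (hP.ne_zero hα) hm, ← hm1, one_smul] at h
  -- both Cartan integers are at least 2, which forces `‖α - β‖ ^ 2 ≤ 0`
  have hk2 : (2 : ℝ) ≤ k := by exact_mod_cast (show (1 : ℤ) < k by exact_mod_cast hk2)
  have hm2 : (2 : ℝ) ≤ m := by exact_mod_cast (show (1 : ℤ) < m by exact_mod_cast hm2)
  refine absurd (sub_eq_zero.mp (real_inner_self_nonpos.mp ?_)) hne
  rw [inner_sub_left, inner_sub_right, inner_sub_right, real_inner_comm α β]
  nlinarith

section positive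

variable {v : E} (hv : ∀ α ∈ P, ⟪v, α⟫ ≠ 0)
include hv

lemma mem_posRoots_or_neg_mem {α : E} (hα : α ∈ P) :
    α ∈ posRoots P v ∨ -α ∈ posRoots P v := by
  simp only [mem_posRoots, inner_neg_right, Left.neg_pos_iff]
  rcases (hv α hα).lt_or_gt with h | h
  · exact Or.inr ⟨hP.neg_mem hα, h⟩
  · exact Or.inl ⟨hα, h⟩

lemma inner_nonpos_of_mem_simpleRoots {δ γ : E} (hδ : δ ∈ simpleRoots P v)
    (hγ : γ ∈ simpleRoots P v) (hne : δ ≠ γ) : ⟪δ, γ⟫ ≤ 0 := by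
  by_contra! hpos
  rw [mem_simpleRoots] at hδ hγ
  have hsub : δ - γ ∈ P := by
    rcases hP.sub_mem_or_sub_mem (mem_posRoots.mp hδ.1).1 (mem_posRoots.mp hγ.1).1 hpos hne
      with h | h
    · exact h
    · simpa using hP.neg_mem h
  rcases hP.mem_posRoots_or_neg_mem hv hsub with h | h
  · exact hδ.2 γ hγ.1 _ h (by abel)
  · exact hγ.2 δ hδ.1 _ h (by abel)

lemma eq_zero_of_sum_erase_eq_smul [DecidableEq E] {δ : E} (hδ : δ ∈ simpleRoots P v) {c : E → ℝ}
    (hc : ∀ γ, 0 ≤ c γ) {t : ℝ} (h : ∑ γ ∈ (simpleRoots P v).erase δ, c γ • γ = t • δ)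
    {γ : E} (hγ : γ ∈ (simpleRoots P v).erase δ) : c γ = 0 := by
  have hδ' := mem_posRoots.mp (simpleRoots_subset_posRoots hδ)
  have hvpos : ∀ γ ∈ (simpleRoots P v).erase δ, 0 < ⟪v, γ⟫ := fun γ hγ =>
    (mem_posRoots.mp (simpleRoots_subset_posRoots (mem_of_mem_erase hγ))).2
  have ht : t ≤ 0 := by
    have htδ : t * ⟪δ, δ⟫ ≤ 0 := by
      rw [← real_inner_smul_left, ← h, sum_inner]
      refine sum_nonpos fun γ hγ => ?_
      rw [real_inner_smul_left]
      exact mul_nonpos_of_nonneg_of_nonpos (hc γ) (hP.inner_nonpos_of_mem_simpleRoots hv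
        (mem_of_mem_erase hγ) hδ (ne_of_mem_erase hγ))
    exact nonpos_of_mul_nonpos_left htδ (real_inner_self_pos.mpr (hP.ne_zero hδ'.1))
  have hterm : ∀ γ ∈ (simpleRoots P v).erase δ, 0 ≤ c γ * ⟪v, γ⟫ := fun γ hγ =>
    mul_nonneg (hc γ) (hvpos γ hγ).le
  have hsum : ∑ γ ∈ (simpleRoots P v).erase δ, c γ * ⟪v, γ⟫ = 0 := by
    refine le_antisymm ?_ (sum_nonneg hterm)
    calc ∑ γ ∈ (simpleRoots P v).erase δ, c γ * ⟪v, γ⟫ = t * ⟪v, δ⟫ := by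
          simp only [← real_inner_smul_right, ← inner_sum, h]
      _ ≤ 0 := mul_nonpos_of_nonpos_of_nonneg ht hδ'.2.le
  exact ((mul_eq_zero.mp ((sum_eq_zero_iff_of_nonneg hterm).mp hsum γ hγ)).resolve_right
    (hvpos γ hγ).ne')

lemma reflection_mem_posRoots {δ x : E} (hδ : δ ∈ simpleRoots P v) (hx : x ∈ posRoots P v)
    (hxδ : ∀ c : ℝ, x ≠ c • δ) : s δ x ∈ posRoots P v := by
  classical
  have hδP := (mem_posRoots.mp (simpleRoots_subset_posRoots hδ)).1
  refine (hP.mem_posRoots_or_neg_mem hv (hP.reflection_mem δ hδP x (mem_posRoots.mp hx).1)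
    ).resolve_right fun hneg => ?_
  obtain ⟨a, ha, hxa⟩ := exists_nonneg_sum_simpleRoots hx
  obtain ⟨b, hb, hxb⟩ := exists_nonneg_sum_simpleRoots hneg
  rw [hP.reflections δ (hP.ne_zero hδP)] at hxb
  -- adding the expansions of `x` and `-(s δ x)`, the simple roots other than `δ` sum to a
  -- multiple of `δ`
  have hsum : ∑ γ ∈ (simpleRoots P v).erase δ, (a γ + b γ) • γ =
      (2 * ⟪x, δ⟫ / ⟪δ, δ⟫ - (a δ + b δ)) • δ := by
    have h := congrArg₂ (· + ·) hxa hxb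
    rw [← sum_add_distrib, ← add_sum_erase _ _ hδ] at h
    simp only [← add_smul] at h
    rw [sub_smul, eq_sub_iff_add_eq', ← h]
    abel
  have hzero : ∀ γ ∈ (simpleRoots P v).erase δ, a γ = 0 := fun γ hγ => by
    have := hP.eq_zero_of_sum_erase_eq_smul hv hδ (fun γ => add_nonneg (ha γ) (hb γ)) hsum hγ
    linarith [ha γ, hb γ]
  refine hxδ (a δ) ?_
  rw [hxa, ← add_sum_erase _ _ hδ, sum_eq_zero fun γ hγ => by rw [hzero γ hγ, zero_smul],
    add_zero]

lemma reflection_mem_weylGroup_simpleRoots {x : E} (hx : x ∈ posRoots P v) :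
    s x ∈ weylGroup s (simpleRoots P v) := by
  have hs := hP.reflections
  refine induction_on_value_lt (⟪v, ·⟫) hx fun x hx ih => ?_
  have hx0 := hP.ne_zero (mem_posRoots.mp hx).1
  by_cases hmul : ∃ δ ∈ simpleRoots P v, ∃ c : ℝ, x = c • δ
  · obtain ⟨δ, hδ, c, rfl⟩ := hmul
    rw [hs.smul_eq (hP.ne_zero (mem_posRoots.mp (simpleRoots_subset_posRoots hδ)).1)
      (left_ne_zero_of_smul hx0)]
    exact reflection_mem_weylGroup hδ
  push Not at hmul
  obtain ⟨δ, hδ, hxδ⟩ : ∃ δ ∈ simpleRoots P v, 0 < ⟪x, δ⟫ := by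
    by_contra! h
    have := nonneg_of_forall_simpleRoots hx (-innerₗ E x) (by simpa using h)
    exact hx0 (real_inner_self_nonpos.mp (by simpa using this))
  have hδ' := mem_posRoots.mp (simpleRoots_subset_posRoots hδ)
  have hδ0 := hP.ne_zero hδ'.1
  have hy := hP.reflection_mem_posRoots hv hδ hx (hmul δ hδ)
  have hlt : ⟪v, s δ x⟫ < ⟪v, x⟫ := by
    have := div_pos (mul_pos two_pos hxδ) (real_inner_self_pos.mpr hδ0)
    rw [hs δ hδ0, inner_sub_right, real_inner_smul_right]
    nlinarith [hδ'.2]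
  have hconj : s x = s δ * s (s δ x) * s δ := by
    conv_lhs => rw [← hs.apply_apply hδ0 x]
    rw [hs.map_eq_conj (hP.ne_zero (mem_posRoots.mp hy).1) _ (hs.inner_map_map hδ0),
      hs.inv_eq hδ0]
  rw [hconj]
  exact mul_mem (mul_mem (reflection_mem_weylGroup hδ) (ih _ hy hlt)) (reflection_mem_weylGroup hδ)

lemma weylGroup_le_weylGroup_simpleRoots : weylGroup s P ≤ weylGroup s (simpleRoots P v) := by
  refine (Subgroup.closure_le _).mpr ?_
  rintro _ ⟨α, hα, rfl⟩
  rcases hP.mem_posRoots_or_neg_mem hv hα with h | h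
  · exact hP.reflection_mem_weylGroup_simpleRoots hv h
  · rw [← hP.reflections.smul_eq (hP.ne_zero hα) (neg_ne_zero.mpr one_ne_zero), neg_one_smul]
    exact hP.reflection_mem_weylGroup_simpleRoots hv h

lemma exists_shorter_list {l : List E} (hl : ∀ δ ∈ l, δ ∈ simpleRoots P v) {α : E}
    (hα : α ∈ simpleRoots P v) (hneg : ⟪v, (l.map s).prod α⟫ < 0) :
    ∃ l' : List E, (∀ δ ∈ l', δ ∈ simpleRoots P v) ∧ l'.length < l.length ∧
      (l.map s).prod * s α = (l'.map s).prod := by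
  have hs := hP.reflections
  have hα' := mem_posRoots.mp (simpleRoots_subset_posRoots hα)
  induction l with
  | nil => exact absurd hneg (by simpa using hα'.2.le)
  | cons δ l ih =>
    have hδ := hl δ (by simp)
    have hl' : ∀ γ ∈ l, γ ∈ simpleRoots P v := fun γ hγ => hl γ (by simp [hγ])
    simp only [List.map_cons, List.prod_cons, LinearEquiv.mul_apply] at hneg ⊢
    set u := (l.map s).prod
    have hu : u ∈ weylGroup s P := weylGroup_mono
      (simpleRoots_subset_posRoots.trans posRoots_subset) (list_prod_mem_weylGroup hl')
    by_cases hux : ⟪v, u α⟫ < 0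
    · obtain ⟨l', hl'', hlen, heq⟩ := ih hl' hux
      exact ⟨δ :: l', by simpa [hδ] using hl'', by simpa using hlen, by rw [mul_assoc, heq]; rfl⟩
    -- `u α` is a positive root that `s δ` makes negative, so it is a multiple of `δ`
    have hpos : u α ∈ posRoots P v := mem_posRoots.mpr ⟨hP.map_mem_of_mem_weylGroup hu hα'.1,
      lt_of_le_of_ne (not_lt.mp hux) (hv _ (hP.map_mem_of_mem_weylGroup hu hα'.1)).symm⟩
    obtain ⟨c, hc⟩ : ∃ c : ℝ, u α = c • δ := by
      by_contra! h
      exact (mem_posRoots.mp (hP.reflection_mem_posRoots hv hδ hpos h)).2.not_gt hneg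
    have hα0 := hP.ne_zero hα'.1
    have hsδ : s δ = u * s α * u⁻¹ := by
      rw [← hs.map_eq_conj hα0 u (hP.inner_map_map_of_mem_weylGroup hu), hc,
        hs.smul_eq (hP.ne_zero (mem_posRoots.mp (simpleRoots_subset_posRoots hδ)).1)]
      rintro rfl
      exact hP.ne_zero (mem_posRoots.mp hpos).1 (by rw [hc, zero_smul])
    exact ⟨l, hl', by simp, by simp [hsδ, mul_assoc, hs.mul_self hα0, u]⟩

lemma eq_one_of_forall_inner_pos {w : E ≃ₗ[ℝ] E} (hw : w ∈ weylGroup s P)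
    (hpos : ∀ x ∈ posRoots P v, 0 < ⟪v, w x⟫) : w = 1 := by
  have hs := hP.reflections
  obtain ⟨l, hl, rfl⟩ := hs.exists_list_of_mem_weylGroup
    (fun h => hP.zero_notMem (posRoots_subset (simpleRoots_subset_posRoots h)))
    (hP.weylGroup_le_weylGroup_simpleRoots hv hw)
  clear hw
  induction h : l.length using Nat.strong_induction_on generalizing l with
  | _ n ih =>
  rcases l.eq_nil_or_concat with rfl | ⟨L, b, rfl⟩
  · rfl
  have hb := hl b (by simp)
  have hb' := mem_posRoots.mp (simpleRoots_subset_posRoots hb)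
  have hprod : ((L.concat b).map s).prod = (L.map s).prod * s b := by simp
  -- the word ends in `s b` but keeps `b` positive, so its prefix makes `b` negative
  have hneg : ⟪v, (L.map s).prod b⟫ < 0 := by
    have := hpos b (simpleRoots_subset_posRoots hb)
    rwa [hprod, LinearEquiv.mul_apply, hs.apply_self (hP.ne_zero hb'.1), map_neg,
      inner_neg_right, neg_pos] at this
  obtain ⟨l', hl', hlen, heq⟩ := hP.exists_shorter_list hv (fun δ hδ => hl δ (by simp [hδ])) hb hneg
  rw [hprod, heq] at hpos ⊢
  exact ih l'.length (by simp at h; omega) l' hl' hpos rfl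

lemma card_filter_reflection_lt {δ : E} (hδ : δ ∈ simpleRoots P v) (g : E ≃ₗ[ℝ] E)
    (hgδ : ⟪v, g δ⟫ < 0) :
    #{x ∈ posRoots P v | ⟪v, g (s δ x)⟫ < 0} < #{x ∈ posRoots P v | ⟪v, g x⟫ < 0} := by
  classical
  have hs := hP.reflections
  have hδ' := mem_posRoots.mp (simpleRoots_subset_posRoots hδ)
  have hδ0 := hP.ne_zero hδ'.1
  refine lt_of_le_of_lt (card_le_card_of_injOn (s δ) (fun x hx => ?_) (s δ).injective.injOn)
    (card_erase_lt_of_mem (mem_filter.mpr ⟨simpleRoots_subset_posRoots hδ, hgδ⟩))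
  obtain ⟨hx, hgx⟩ := mem_filter.mp hx
  have hxδ : ∀ c : ℝ, x ≠ c • δ := by
    rintro c rfl
    have hc : 0 < c := pos_of_mul_pos_left (by simpa [real_inner_smul_right] using
      (mem_posRoots.mp hx).2) hδ'.2.le
    rw [map_smul, hs.apply_self hδ0, smul_neg, map_neg, inner_neg_right, map_smul,
      real_inner_smul_right] at hgx
    nlinarith
  refine mem_erase.mpr
    ⟨fun h => hxδ (-1) ?_, mem_filter.mpr ⟨hP.reflection_mem_posRoots hv hδ hx hxδ, hgx⟩⟩
  rw [← hs.apply_apply hδ0 x, h, hs.apply_self hδ0, neg_one_smul]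

end positive

end IsRootSet

/-- The restricted root `ᾱ`: the orthogonal projection of `α` to the `+1` eigenspace of `θ`
when `θ` is an isometric involution. -/
noncomputable def fixedPart (θ : E ≃ₗ[ℝ] E) (x : E) : E := (1 / 2 : ℝ) • (x + θ x)

open Classical in
noncomputable def restrictedRoots (θ : E ≃ₗ[ℝ] E) (R : Finset E) : Finset E :=
  R.image (fixedPart θ)

lemma mem_restrictedRoots {θ : E ≃ₗ[ℝ] E} {R : Finset E} {x : E} :
    x ∈ restrictedRoots θ R ↔ ∃ α ∈ R, fixedPart θ α = x := by
  classical
  exact mem_image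

section fixedPart

variable {θ : E ≃ₗ[ℝ] E}

lemma map_fixedPart_of_commute {w : E ≃ₗ[ℝ] E} (hw : ∀ x, w (θ x) = θ (w x)) (x : E) :
    w (fixedPart θ x) = fixedPart θ (w x) := by
  simp [fixedPart, hw]

lemma fixedPart_eq_zero_iff {x : E} : fixedPart θ x = 0 ↔ θ x = -x := by
  simp only [fixedPart, smul_eq_zero, one_div, inv_eq_zero, two_ne_zero, false_or,
    add_eq_zero_iff_eq_neg']

variable (hθ : ∀ x, θ (θ x) = x)
include hθ

lemma map_fixedPart (x : E) : θ (fixedPart θ x) = fixedPart θ x := by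
  simp only [fixedPart, map_smul, map_add, hθ, add_comm]

lemma map_eq_of_mem_restrictedRoots {R : Finset E} {x : E} (hx : x ∈ restrictedRoots θ R) :
    θ x = x := by
  obtain ⟨α, -, rfl⟩ := mem_restrictedRoots.mp hx
  exact map_fixedPart hθ α

variable (hθi : ∀ x y, ⟪θ x, θ y⟫ = ⟪x, y⟫)
include hθi

lemma inner_map_left (x y : E) : ⟪θ x, y⟫ = ⟪x, θ y⟫ := by
  rw [← hθi x (θ y), hθ]

lemma inner_fixedPart_right_of_map_eq {v : E} (hv : θ v = v) (x : E) :
    ⟪v, fixedPart θ x⟫ = ⟪v, x⟫ := by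
  rw [fixedPart, real_inner_smul_right, inner_add_right, ← inner_map_left hθ hθi, hv]
  ring

lemma two_mul_inner_fixedPart (x y : E) :
    2 * ⟪fixedPart θ x, fixedPart θ y⟫ = ⟪x, y⟫ + ⟪x, θ y⟫ := by
  rw [real_inner_comm, inner_fixedPart_right_of_map_eq hθ hθi (map_fixedPart hθ y),
    real_inner_comm, fixedPart, real_inner_smul_right, inner_add_right]
  ring

end fixedPart

structure IsRootInvolution (R : Finset E) (θ : E ≃ₗ[ℝ] E) : Prop where
  apply_apply : ∀ x, θ (θ x) = x
  inner_map_map : ∀ x y, ⟪θ x, θ y⟫ = ⟪x, y⟫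
  map_mem : ∀ α ∈ R, θ α ∈ R
  map_ne_neg : ∀ α ∈ R, θ α ≠ -α

namespace IsRootInvolution

variable {s : E → E ≃ₗ[ℝ] E} {R : Finset E} {θ : E ≃ₗ[ℝ] E} (hθ : IsRootInvolution R θ)
  (hR : IsRootSet s R)
include hθ hR

lemma map_eq_or_inner_eq_zero_or_add_mem {α : E} (hα : α ∈ R) :
    θ α = α ∨ ⟪α, θ α⟫ = 0 ∨ (2 * ⟪α, θ α⟫ = -⟪α, α⟫ ∧ α + θ α ∈ R) := by
  obtain ⟨k, hk⟩ := hR.exists_int α hα (θ α) (hθ.map_mem α hα)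
  have hrefl := hR.reflections.apply_of_two_inner_eq (hR.ne_zero (hθ.map_mem α hα)) hk
  have hαα := hθ.inner_map_map α α
  rw [hαα] at hk
  have hA := real_inner_self_pos.mpr (hR.ne_zero hα)
  have hk2 : (k : ℝ) ^ 2 ≤ 2 ^ 2 := by
    have hcs := real_inner_mul_inner_self_le α (θ α)
    rw [hαα] at hcs
    refine le_of_mul_le_mul_right ?_ (pow_pos hA 2)
    calc (k : ℝ) ^ 2 * ⟪α, α⟫ ^ 2 = (2 * ⟪α, θ α⟫) ^ 2 := by rw [hk]; ring
      _ ≤ 2 ^ 2 * ⟪α, α⟫ ^ 2 := by nlinarith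
  have hk₁ : -2 ≤ k := by exact_mod_cast (abs_le_of_sq_le_sq' hk2 zero_le_two).1
  have hk₂ : k ≤ 2 := by exact_mod_cast (abs_le_of_sq_le_sq' hk2 zero_le_two).2
  interval_cases k
  · refine absurd (eq_neg_of_add_eq_zero_right (real_inner_self_nonpos.mp ?_)) (hθ.map_ne_neg α hα)
    rw [inner_add_left, inner_add_right, inner_add_right, hαα, real_inner_comm α (θ α)]
    push_cast at hk
    linarith
  · refine Or.inr (Or.inr ⟨by push_cast at hk; linarith, ?_⟩)
    simpa [hrefl] using hR.reflection_mem _ (hθ.map_mem α hα) α hα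
  · exact Or.inr (Or.inl (by simpa using hk))
  · have h := hR.reflection_mem _ (hθ.map_mem α hα) α hα
    rw [hrefl, Int.cast_one, one_smul] at h
    exact absurd (by simp [hθ.apply_apply]) (hθ.map_ne_neg _ h)
  · refine Or.inl (sub_eq_zero.mp (real_inner_self_nonpos.mp ?_)).symm
    rw [inner_sub_left, inner_sub_right, inner_sub_right, hαα, real_inner_comm α (θ α)]
    push_cast at hk
    linarith

lemma exists_weylGroup_lift {α : E} (hα : α ∈ R) :
    ∃ w ∈ weylGroup s R, (∀ z, w (θ z) = θ (w z)) ∧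
      ∀ z, θ z = z → w z = s (fixedPart θ α) z := by
  have hs := hR.reflections
  have hα0 := hR.ne_zero hα
  rcases hθ.map_eq_or_inner_eq_zero_or_add_mem hR hα with hfix | horth | ⟨-, hsum⟩
  · refine ⟨s α, reflection_mem_weylGroup hα,
      hs.apply_map_of_map_eq hα0 hθ.inner_map_map hfix, fun z _ => ?_⟩
    rw [show fixedPart θ α = α by rw [fixedPart, hfix]; module]
  · have hA := (real_inner_self_pos.mpr hα0).ne'
    have hαα := hθ.inner_map_map α α
    have hprod : ∀ z, (s α * s (θ α)) z =
        z - (2 * ⟪z, α⟫ / ⟪α, α⟫) • α - (2 * ⟪z, θ α⟫ / ⟪α, α⟫) • θ α := fun z => by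
      rw [LinearEquiv.mul_apply, hs _ (hR.ne_zero (hθ.map_mem α hα)), hs α hα0, hαα,
        inner_sub_left, real_inner_smul_left, real_inner_comm α (θ α), horth]
      module
    refine ⟨s α * s (θ α), mul_mem (reflection_mem_weylGroup hα)
      (reflection_mem_weylGroup (hθ.map_mem α hα)), fun z => ?_, fun z hz => ?_⟩
    · rw [hprod, hprod, inner_map_left hθ.apply_apply hθ.inner_map_map, hθ.inner_map_map,
        map_sub, map_sub, map_smul, map_smul, hθ.apply_apply]
      module
    · have hzθ : ⟪z, θ α⟫ = ⟪z, α⟫ := by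
        rw [← inner_map_left hθ.apply_apply hθ.inner_map_map, hz]
      have hαbar : ⟪fixedPart θ α, fixedPart θ α⟫ = ⟪α, α⟫ / 2 := by
        linarith [two_mul_inner_fixedPart hθ.apply_apply hθ.inner_map_map α α]
      rw [hprod, hs _ (fixedPart_eq_zero_iff.not.mpr (hθ.map_ne_neg α hα)), hαbar,
        real_inner_comm, inner_fixedPart_right_of_map_eq hθ.apply_apply hθ.inner_map_map hz,
        real_inner_comm, hzθ, fixedPart]
      match_scalars <;> field_simp
  · have hfix : θ (α + θ α) = α + θ α := by rw [map_add, hθ.apply_apply, add_comm]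
    refine ⟨s (α + θ α), reflection_mem_weylGroup hsum,
      hs.apply_map_of_map_eq (hR.ne_zero hsum) hθ.inner_map_map hfix, fun z _ => ?_⟩
    rw [fixedPart, hs.smul_eq (hR.ne_zero hsum) (by norm_num)]

lemma exists_int_fixedPart {α β : E} (hα : α ∈ R) (hβ : β ∈ R) :
    ∃ k : ℤ, 2 * ⟪fixedPart θ α, fixedPart θ β⟫ = k * ⟪fixedPart θ β, fixedPart θ β⟫ := by
  have hαβ := two_mul_inner_fixedPart hθ.apply_apply hθ.inner_map_map α β
  have hββ := two_mul_inner_fixedPart hθ.apply_apply hθ.inner_map_map β β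
  obtain ⟨k, hk⟩ := hR.exists_int α hα β hβ
  rcases hθ.map_eq_or_inner_eq_zero_or_add_mem hR hβ with hfix | horth | ⟨hneg, hsum⟩
  · rw [hfix] at hαβ hββ
    exact ⟨k, by linear_combination hαβ + hk - k / 2 * hββ⟩
  · obtain ⟨l, hl⟩ := hR.exists_int α hα (θ β) (hθ.map_mem β hβ)
    rw [hθ.inner_map_map] at hl
    refine ⟨k + l, ?_⟩
    push_cast
    linear_combination hαβ + hk / 2 + hl / 2 - (k + l) / 2 * hββ - (k + l) / 2 * horth
  · obtain ⟨m, hm⟩ := hR.exists_int α hα _ hsum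
    have hsq : ⟪β + θ β, β + θ β⟫ = ⟪β, β⟫ := by
      rw [inner_add_left, inner_add_right, inner_add_right, hθ.inner_map_map,
        real_inner_comm β (θ β)]
      linarith
    rw [hsq, inner_add_right] at hm
    refine ⟨2 * m, ?_⟩
    push_cast
    linear_combination hαβ + hm / 2 - m * hββ - m / 2 * hneg

lemma isRootSet_restrictedRoots : IsRootSet s (restrictedRoots θ R) where
  reflections := hR.reflections
  zero_notMem h := by
    obtain ⟨α, hα, h0⟩ := mem_restrictedRoots.mp h
    exact hθ.map_ne_neg α hα (fixedPart_eq_zero_iff.mp h0)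
  reflection_mem := by
    simp only [mem_restrictedRoots]
    rintro _ ⟨α, hα, rfl⟩ _ ⟨β, hβ, rfl⟩
    obtain ⟨w, hw, hwθ, hwα⟩ := hθ.exists_weylGroup_lift hR hα
    refine ⟨w β, hR.map_mem_of_mem_weylGroup hw hβ, ?_⟩
    rw [← hwα _ (map_fixedPart hθ.apply_apply β), map_fixedPart_of_commute hwθ]
  exists_int := by
    simp only [mem_restrictedRoots]
    rintro _ ⟨α, hα, rfl⟩ _ ⟨β, hβ, rfl⟩
    exact hθ.exists_int_fixedPart hR hα hβ

section chamber

variable {v : E} (hvθ : θ v = v) (hv : ∀ x ∈ restrictedRoots θ R, ⟪v, x⟫ ≠ 0)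
include hvθ hv

lemma eq_one_of_forall_inner_pos {w : E ≃ₗ[ℝ] E} (hw : w ∈ weylGroup s R)
    (hwθ : ∀ x, w (θ x) = θ (w x))
    (hpos : ∀ x ∈ posRoots (restrictedRoots θ R) v, 0 < ⟪v, w x⟫) : w = 1 := by
  have hfix := inner_fixedPart_right_of_map_eq hθ.apply_apply hθ.inner_map_map hvθ
  have hvR : ∀ α ∈ R, ⟪v, α⟫ ≠ 0 := fun α hα =>
    hfix α ▸ hv _ (mem_restrictedRoots.mpr ⟨α, hα, rfl⟩)
  refine hR.eq_one_of_forall_inner_pos hvR hw fun β hβ => ?_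
  obtain ⟨hβR, hvβ⟩ := mem_posRoots.mp hβ
  have := hpos (fixedPart θ β)
    (mem_posRoots.mpr ⟨mem_restrictedRoots.mpr ⟨β, hβR, rfl⟩, by rwa [hfix]⟩)
  rwa [map_fixedPart_of_commute hwθ, hfix] at this

lemma exists_mem_weylGroup_restrictedRoots_eq {w : E ≃ₗ[ℝ] E} (hw : w ∈ weylGroup s R)
    (hwθ : ∀ x, w (θ x) = θ (w x)) :
    ∃ w' ∈ weylGroup s (restrictedRoots θ R), ∀ z, θ z = z → w z = w' z := by
  set F := restrictedRoots θ R
  have hs := hR.reflections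
  have hF := hθ.isRootSet_restrictedRoots hR
  induction h : #{x ∈ posRoots F v | ⟪v, w x⟫ < 0} using Nat.strong_induction_on
    generalizing w with
  | _ n ih =>
  have hwF : ∀ x ∈ F, w x ∈ F := fun x hx => by
    obtain ⟨α, hα, rfl⟩ := mem_restrictedRoots.mp hx
    rw [map_fixedPart_of_commute hwθ]
    exact mem_restrictedRoots.mpr ⟨w α, hR.map_mem_of_mem_weylGroup hw hα, rfl⟩
  by_cases hneg : ∃ x ∈ posRoots F v, ⟪v, w x⟫ < 0
  swap
  · push Not at hneg
    refine ⟨1, one_mem _, fun z _ => ?_⟩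
    rw [hθ.eq_one_of_forall_inner_pos hR hvθ hv hw hwθ fun x hx =>
      (hneg x hx).lt_of_ne (hv _ (hwF x (posRoots_subset hx))).symm]
  -- `w` makes a simple restricted root `δ` negative; with `u ∈ W^θ` lifting `s δ`, the element
  -- `w * u` makes fewer positive restricted roots negative
  obtain ⟨δ, hδ, hwδ⟩ : ∃ δ ∈ simpleRoots F v, ⟪v, w δ⟫ < 0 := by
    by_contra! h'
    obtain ⟨x, hx, hwx⟩ := hneg
    exact (nonneg_of_forall_simpleRoots hx ((innerₗ E v) ∘ₗ w.toLinearMap)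
      (by simpa using h')).not_gt (by simpa using hwx)
  have hδF := posRoots_subset (simpleRoots_subset_posRoots hδ)
  have hδ0 := hF.ne_zero hδF
  obtain ⟨γ, hγ, hγδ⟩ := mem_restrictedRoots.mp hδF
  obtain ⟨u, hu, huθ, huδ⟩ := hθ.exists_weylGroup_lift hR hγ
  rw [hγδ] at huδ
  have hlt : #{x ∈ posRoots F v | ⟪v, (w * u) x⟫ < 0} < n := by
    rw [← h]
    convert hF.card_filter_reflection_lt hv hδ w hwδ using 3 with x hx
    rw [LinearEquiv.mul_apply,
      huδ x (map_eq_of_mem_restrictedRoots hθ.apply_apply (posRoots_subset hx))]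
  obtain ⟨w', hw', hww'⟩ := ih _ hlt (mul_mem hw hu) (fun x => by simp [huθ, hwθ]) rfl
  refine ⟨w' * s δ, mul_mem hw' (reflection_mem_weylGroup hδF), fun z hz => ?_⟩
  have hsz : θ (s δ z) = s δ z := by
    rw [← hs.apply_map_of_map_eq hδ0 hθ.inner_map_map
      (map_eq_of_mem_restrictedRoots hθ.apply_apply hδF), hz]
  calc w z = (w * u) (s δ z) := by rw [LinearEquiv.mul_apply, huδ _ hsz, hs.apply_apply hδ0]
    _ = w' (s δ z) := hww' _ hsz

end chamber

end IsRootInvolution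

lemma Submodule.exists_mem_forall_inner_ne_zero (K : Submodule ℝ E) (T : Finset E)
    (hT : ∀ x ∈ T, x ∈ K ∧ x ≠ 0) : ∃ v ∈ K, ∀ x ∈ T, ⟪v, x⟫ ≠ 0 := by
  classical
  induction T using Finset.induction_on with
  | empty => exact ⟨0, K.zero_mem, by simp⟩
  | insert x T _ ih =>
    obtain ⟨v, hvK, hv⟩ := ih fun y hy => hT y (mem_insert_of_mem hy)
    obtain ⟨hxK, hx0⟩ := hT x (mem_insert_self x T)
    -- `v + t • x` works for every `t` outside a finite set
    obtain ⟨t, ht⟩ := Infinite.exists_notMem_finset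
      ((insert x T).image fun y => -⟪v, y⟫ / ⟪x, y⟫)
    refine ⟨v + t • x, K.add_mem hvK (K.smul_mem t hxK), fun y hy => ?_⟩
    rw [inner_add_left, real_inner_smul_left]
    by_cases hxy : ⟪x, y⟫ = 0
    · have hyT : y ∈ T := (mem_insert.mp hy).resolve_left fun hyx =>
        hx0 (inner_self_eq_zero.mp (hyx ▸ hxy))
      simpa [hxy] using hv y hyT
    · intro h
      exact ht (mem_image.mpr ⟨y, hy, by field_simp; linarith⟩)

end

/-- Let `R` be a (crystallographic) root system in a Euclidean space, stable under the
reflections `s α`, and let `θ` be an involutive automorphism of the root system such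
that no root restricts to zero on the `+1` eigenspace of `θ` (no real roots).  Then the
restricted roots (orthogonal projections `(α + θα)/2` to the `+1` eigenspace) form a
possibly non-reduced root system (nonzero, stable under their reflections, and with
integral Cartan pairings), and restriction to the `+1` eigenspace of `θ` gives an
injective homomorphism from `W^θ` to the Weyl group of the restricted system. -/
theorem stmt16 {E : Type} [NormedAddCommGroup E] [InnerProductSpace ℝ E]
    (R : Finset E) (hR0 : (0 : E) ∉ R)
    (s : E → (E ≃ₗ[ℝ] E))
    (hs : ∀ α : E, α ≠ 0 → ∀ x : E, s α x = x - ((2 * inner ℝ x α / inner ℝ α α : ℝ)) • α)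
    (hstab : ∀ α ∈ R, ∀ β ∈ R, s α β ∈ R)
    (hcrys : ∀ α ∈ R, ∀ β ∈ R, ∃ k : ℤ, 2 * (inner ℝ α β : ℝ) = (k : ℝ) * inner ℝ β β)
    (θ : E ≃ₗ[ℝ] E) (hθinv : ∀ x, θ (θ x) = x)
    (hθinner : ∀ x y : E, (inner ℝ (θ x) (θ y) : ℝ) = inner ℝ x y)
    (hθR : ∀ α ∈ R, θ α ∈ R)
    (hnoreal : ∀ α ∈ R, θ α ≠ -α)
    (Rres : Set E) (hRres : Rres = {x : E | ∃ α ∈ R, x = (1 / 2 : ℝ) • (α + θ α)}) :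
    (∀ x ∈ Rres, x ≠ 0) ∧
    (∀ x ∈ Rres, ∀ y ∈ Rres, s x y ∈ Rres) ∧
    (∀ x ∈ Rres, ∀ y ∈ Rres, ∃ k : ℤ, 2 * (inner ℝ x y : ℝ) = (k : ℝ) * inner ℝ y y) ∧
    -- restriction of elements of `W^θ` lies in the restricted Weyl group:
    (∀ w ∈ Subgroup.closure {g : E ≃ₗ[ℝ] E | ∃ α ∈ R, g = s α},
      (∀ x, w (θ x) = θ (w x)) →
      ∃ w' ∈ Subgroup.closure {g : E ≃ₗ[ℝ] E | ∃ x ∈ Rres, g = s x},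
        ∀ x, θ x = x → w x = w' x) ∧
    -- injectivity of the restriction homomorphism on `W^θ`:
    (∀ w ∈ Subgroup.closure {g : E ≃ₗ[ℝ] E | ∃ α ∈ R, g = s α},
      (∀ x, w (θ x) = θ (w x)) → (∀ x, θ x = x → w x = x) → w = 1) := by
  have hR : IsRootSet s R := ⟨hs, hR0, hstab, hcrys⟩
  have hθ : IsRootInvolution R θ := ⟨hθinv, hθinner, hθR, hnoreal⟩
  have hF := hθ.isRootSet_restrictedRoots hR
  have hfix : ∀ x ∈ restrictedRoots θ R, θ x = x := fun _ => map_eq_of_mem_restrictedRoots hθinv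
  obtain ⟨v, hvθ, hv⟩ :=
    (LinearMap.eqLocus θ.toLinearMap LinearMap.id).exists_mem_forall_inner_ne_zero
      (restrictedRoots θ R) fun x hx => ⟨hfix x hx, hF.ne_zero hx⟩
  obtain rfl : Rres = restrictedRoots θ R := by
    ext x
    simp [hRres, mem_restrictedRoots, fixedPart, eq_comm]
  refine ⟨fun x => hF.ne_zero, hF.reflection_mem, hF.exists_int,
    fun w hw hwθ => hθ.exists_mem_weylGroup_restrictedRoots_eq hR hvθ hv hw hwθ,
    fun w hw hwθ hw1 => hθ.eq_one_of_forall_inner_pos hR hvθ hv hw hwθ fun x hx => ?_⟩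
  rw [hw1 x (hfix x (posRoots_subset hx))]
  exact (mem_posRoots.mp hx).2
end
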